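/- Let 0 < m < 1 < M and let s, y ∈ ℝⁿ with s ≠ 0. Suppose the curvature conditions m sᵀs ≤ yᵀs and yᵀy ≤ M yᵀs hold. Then the parameter produced by the selection rule (20) is γ = 0; in particular, the smaller root γ̲ of p(γ) = 0 satisfies γ̲ ≤ 0 whenever s ≠ y, and with γ = 0 the vector z = y satisfies both conditions zᵀs ≥ m sᵀs and zᵀz ≤ M zᵀs, so that the modified BFGS update coincides with the standard BFGS update. -/
import Mathlib


open RealInnerProductSpace Matrix

/-- `γ̌ = (m sᵀs − yᵀs)/(sᵀs − yᵀs)`. -/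
noncomputable def gammaCheck {n : ℕ} (m : ℝ) (s y : EuclideanSpace ℝ (Fin n)) : ℝ :=
  (m * ⟪s, s⟫ - ⟪y, s⟫) / (⟪s, s⟫ - ⟪y, s⟫)

/-- `γ̲`, the smaller root of
`p(γ) = γ²(s−y)ᵀ(s−y) + γ(s−y)ᵀ(2y − Ms) + yᵀ(y − Ms)` (for `s ≠ y`), given by the
explicit formula (17) of the paper. -/
noncomputable def gammaLower {n : ℕ} (M : ℝ) (s y : EuclideanSpace ℝ (Fin n)) : ℝ :=
  (⟪s - y, M • s - (2 : ℝ) • y⟫ -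
      Real.sqrt (M ^ 2 * ⟪s, s - y⟫ ^ 2 +
        4 * (M - 1) * (⟪s, s⟫ * ⟪y, y⟫ - ⟪y, s⟫ ^ 2))) /
    (2 * ⟪s - y, s - y⟫)

open Classical in
/-- The selection rule (20): `γ = max{γ̲, γ̌}` if `m sᵀs > yᵀs`;
`γ = max{0, γ̲}` if `m sᵀs ≤ yᵀs` and `s ≠ y`; `γ = 0` if `s = y`. -/
noncomputable def selectGamma {n : ℕ} (m M : ℝ) (s y : EuclideanSpace ℝ (Fin n)) : ℝ :=
  if s = y then 0
  else if ⟪y, s⟫ < m * ⟪s, s⟫ then max (gammaLower M s y) (gammaCheck m s y)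
  else max 0 (gammaLower M s y)

/-- The modified BFGS update `E⁺ = E − (E s sᵀ E)/(sᵀ E s) + (z zᵀ)/(zᵀ s)`. -/
noncomputable def bfgsUpdate {n : ℕ} (E : Matrix (Fin n) (Fin n) ℝ)
    (s z : EuclideanSpace ℝ (Fin n)) : Matrix (Fin n) (Fin n) ℝ :=
  E - (s ⬝ᵥ E.mulVec s)⁻¹ • Matrix.vecMulVec (E.mulVec s) (Matrix.vecMul s E) +
    (z ⬝ᵥ (s : Fin n → ℝ))⁻¹ • Matrix.vecMulVec z z

/-- **When the ordinary curvature conditions already hold, the rule (20) picks `γ = 0`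
   and the modified BFGS update is the standard BFGS update.**
Let `0 < m < 1 < M`, `s, y ∈ ℝⁿ`, `s ≠ 0`, and suppose `m sᵀs ≤ yᵀs` and
`yᵀy ≤ M yᵀs`.  Then the `γ` of rule (20) equals `0`; in particular `γ̲ ≤ 0`
whenever `s ≠ y`, and with `γ = 0` the vector `z = y` satisfies `zᵀs ≥ m sᵀs` and
`zᵀz ≤ M zᵀs`, so the modified BFGS update coincides with the standard BFGS update. -/
theorem stmt16 {n : ℕ} (m M : ℝ) (hm0 : 0 < m) (hm1 : m < 1) (hM : 1 < M)
    (s y : EuclideanSpace ℝ (Fin n)) (hs : s ≠ 0)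
    (hcurv1 : m * ⟪s, s⟫ ≤ ⟪y, s⟫) (hcurv2 : ⟪y, y⟫ ≤ M * ⟪y, s⟫)
    (γ : ℝ) (hγ : γ = selectGamma m M s y)
    (z : EuclideanSpace ℝ (Fin n)) (hz : z = γ • s + (1 - γ) • y) :
    γ = 0 ∧
    (s ≠ y → gammaLower M s y ≤ 0) ∧
    z = y ∧ m * ⟪s, s⟫ ≤ ⟪z, s⟫ ∧ ⟪z, z⟫ ≤ M * ⟪z, s⟫ ∧
    ∀ E : Matrix (Fin n) (Fin n) ℝ, bfgsUpdate E s z = bfgsUpdate E s y := by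
  have hA : (⟪s - y, M • s - (2:ℝ) • y⟫ : ℝ)
      = M * ⟪s, s⟫ - (M + 2) * ⟪y, s⟫ + 2 * ⟪y, y⟫ := by
    rw [inner_sub_left, inner_sub_right, inner_sub_right, real_inner_smul_right,
      real_inner_smul_right, real_inner_smul_right, real_inner_smul_right,
      real_inner_comm s y]
    ring
  have hE : (⟪s - y, s - y⟫ : ℝ) = ⟪s, s⟫ - 2 * ⟪y, s⟫ + ⟪y, y⟫ := by
    rw [inner_sub_left, inner_sub_right, inner_sub_right, real_inner_comm s y]
    ring
  have hSd : (⟪s, s - y⟫ : ℝ) = ⟪s, s⟫ - ⟪y, s⟫ := by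
    rw [inner_sub_right, real_inner_comm s y]
  have glow : s ≠ y → gammaLower M s y ≤ 0 := by
    intro hne
    have hd : s - y ≠ 0 := sub_ne_zero.mpr hne
    have hepos : (0:ℝ) < ⟪s - y, s - y⟫ := by
      rw [real_inner_self_eq_norm_sq]
      exact pow_pos (norm_pos_iff.mpr hd) 2
    have hD : M ^ 2 * (⟪s, s - y⟫:ℝ) ^ 2 + 4 * (M - 1) * (⟪s, s⟫ * ⟪y, y⟫ - ⟪y, s⟫ ^ 2)
        = (⟪s - y, M • s - (2:ℝ) • y⟫:ℝ) ^ 2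
          - 4 * ⟪s - y, s - y⟫ * (⟪y, y⟫ - M * ⟪y, s⟫) := by
      rw [hA, hE, hSd]; ring
    have hpc : (⟪y, y⟫:ℝ) - M * ⟪y, s⟫ ≤ 0 := by linarith
    have hDge : (⟪s - y, M • s - (2:ℝ) • y⟫:ℝ) ^ 2
        ≤ M ^ 2 * (⟪s, s - y⟫:ℝ) ^ 2 + 4 * (M - 1) * (⟪s, s⟫ * ⟪y, y⟫ - ⟪y, s⟫ ^ 2) := by
      rw [hD]; nlinarith
    have hsqrt : (⟪s - y, M • s - (2:ℝ) • y⟫:ℝ)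
        ≤ Real.sqrt (M ^ 2 * (⟪s, s - y⟫:ℝ) ^ 2
            + 4 * (M - 1) * (⟪s, s⟫ * ⟪y, y⟫ - ⟪y, s⟫ ^ 2)) := by
      have h1 := Real.sqrt_le_sqrt hDge
      rw [Real.sqrt_sq_eq_abs] at h1
      exact le_trans (le_abs_self _) h1
    have hnum : (⟪s - y, M • s - (2:ℝ) • y⟫:ℝ)
        - Real.sqrt (M ^ 2 * (⟪s, s - y⟫:ℝ) ^ 2
            + 4 * (M - 1) * (⟪s, s⟫ * ⟪y, y⟫ - ⟪y, s⟫ ^ 2)) ≤ 0 := by linarith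
    exact div_nonpos_of_nonpos_of_nonneg hnum (by positivity)
  have hγ0 : γ = 0 := by
    rw [hγ, selectGamma]
    by_cases hse : s = y
    · simp [hse]
    · rw [if_neg hse, if_neg (not_lt.mpr hcurv1)]
      exact max_eq_left (glow hse)
  have hzy : z = y := by
    rw [hz, hγ0]; simp
  refine ⟨hγ0, glow, hzy, ?_, ?_, ?_⟩
  · rw [hzy]; exact hcurv1
  · rw [hzy]; exact hcurv2
  · intro E; rw [hzy]
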